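/- arXiv:2210.16360 — 4 statements merged into one kernel-verified Lean document; each statement's English description precedes it below -/
import Mathlib

section
/- Let A be a non-zero C*-algebra (possibly non-unital) that is simple, i.e. whose only closed two-sided ideals are 0 and A. Then every ℂ-linear star-algebra automorphism γ of the product C*-algebra A × A is of one of the following two forms: there exist ℂ-linear star-algebra automorphisms α, β of A such that either γ(a, b) = (α(a), β(b)) for all a, b ∈ A, or γ(a, b) = (α(b), β(a)) for all a, b ∈ A. -/
/-- Build a star algebra equivalence from a bijective map preserving all operations. -/
lemma exists_starAlgEquiv_of_bijective {A : Type*} [NonUnitalCStarAlgebra A] (f : A → A)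
    (hbij : Function.Bijective f)
    (hadd : ∀ x y, f (x + y) = f x + f y)
    (hmul : ∀ x y, f (x * y) = f x * f y)
    (hstar : ∀ x, f (star x) = star (f x))
    (hsmul : ∀ (c : ℂ) (x : A), f (c • x) = c • f x) :
    ∃ α : A ≃⋆ₐ[ℂ] A, ∀ x, α x = f x := by
  let e := Equiv.ofBijective f hbij
  exact ⟨{ toFun := f, invFun := e.symm, left_inv := e.left_inv, right_inv := e.right_inv,
           map_mul' := hmul, map_add' := hadd, map_star' := hstar, map_smul' := hsmul },
         fun x => rfl⟩

/-- Key dichotomy: a surjective star-ring homomorphism `ψ : A × A → A` onto a simple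
C*-algebra kills one of the two factors. -/
lemma proj_dichotomy {A : Type*} [NonUnitalCStarAlgebra A] [Nontrivial A]
    (hsimple : ∀ I : TwoSidedIdeal A, IsClosed (I : Set A) → I = ⊥ ∨ I = ⊤)
    (ψ : A × A → A)
    (hadd : ∀ x y, ψ (x + y) = ψ x + ψ y)
    (hmul : ∀ x y, ψ (x * y) = ψ x * ψ y)
    (hstar : ∀ x, ψ (star x) = star (ψ x))
    (hsurj : Function.Surjective ψ) :
    (∀ b : A, ψ (0, b) = 0) ∨ (∀ a : A, ψ (a, 0) = 0) := by
  have hzero : ψ 0 = 0 := by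
    have h := hadd 0 0
    rw [add_zero] at h
    exact add_left_cancel (h.symm.trans (add_zero (ψ 0)).symm)
  have hneg : ∀ x, ψ (-x) = -ψ x := by
    intro x
    have h : ψ x + ψ (-x) = 0 := by rw [← hadd]; simp [hzero]
    exact (neg_eq_of_add_eq_zero_right h).symm
  have h10 : ∀ a b : A, ψ (a, 0) * ψ (0, b) = 0 := by
    intro a b
    have e : ((a, 0) : A × A) * (0, b) = 0 := by
      rw [Prod.mk_mul_mk, mul_zero, zero_mul]; rfl
    rw [← hmul, e, hzero]
  have h01 : ∀ b a : A, ψ (0, b) * ψ (a, 0) = 0 := by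
    intro b a
    have e : ((0, b) : A × A) * (a, 0) = 0 := by
      rw [Prod.mk_mul_mk, mul_zero, zero_mul]; rfl
    rw [← hmul, e, hzero]
  have hdecomp : ∀ c : A, ∃ a b : A, c = ψ (a, 0) + ψ (0, b) := by
    intro c
    obtain ⟨p, hp⟩ := hsurj c
    refine ⟨p.1, p.2, ?_⟩
    rw [← hadd, Prod.mk_add_mk, add_zero, zero_add, hp]
  have hstar1 : ∀ a : A, ψ (star a, 0) = star (ψ (a, 0)) := by
    intro a
    rw [← hstar]; congr 1; simp [Prod.star_def]
  have hstar2 : ∀ b : A, ψ (0, star b) = star (ψ (0, b)) := by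
    intro b
    rw [← hstar]; congr 1; simp [Prod.star_def]
  -- the two range sets
  set s₁ : Set A := {c : A | ∃ a : A, ψ (a, 0) = c} with hs₁
  set s₂ : Set A := {c : A | ∃ b : A, ψ (0, b) = c} with hs₂
  -- they are two-sided ideals
  have z1 : (0 : A) ∈ s₁ := ⟨0, hzero⟩
  have z2 : (0 : A) ∈ s₂ := ⟨0, hzero⟩
  have a1 : ∀ {x y : A}, x ∈ s₁ → y ∈ s₁ → x + y ∈ s₁ := by
    rintro x y ⟨a, rfl⟩ ⟨a', rfl⟩
    exact ⟨a + a', by rw [← hadd, Prod.mk_add_mk, add_zero]⟩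
  have a2 : ∀ {x y : A}, x ∈ s₂ → y ∈ s₂ → x + y ∈ s₂ := by
    rintro x y ⟨b, rfl⟩ ⟨b', rfl⟩
    exact ⟨b + b', by rw [← hadd, Prod.mk_add_mk, add_zero]⟩
  have n1 : ∀ {x : A}, x ∈ s₁ → -x ∈ s₁ := by
    rintro x ⟨a, rfl⟩
    exact ⟨-a, by rw [show ((-a, 0) : A × A) = -(a, 0) by simp, hneg]⟩
  have n2 : ∀ {x : A}, x ∈ s₂ → -x ∈ s₂ := by
    rintro x ⟨b, rfl⟩
    exact ⟨-b, by rw [show ((0, -b) : A × A) = -(0, b) by simp, hneg]⟩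
  have ml1 : ∀ {x y : A}, y ∈ s₁ → x * y ∈ s₁ := by
    rintro x y ⟨a, rfl⟩
    obtain ⟨a', b', rfl⟩ := hdecomp x
    refine ⟨a' * a, ?_⟩
    have : (ψ (a', 0) + ψ (0, b')) * ψ (a, 0) = ψ (a' * a, 0) := by
      rw [add_mul, h01, add_zero, ← hmul, Prod.mk_mul_mk, mul_zero]
    exact this.symm ▸ rfl
  have mr1 : ∀ {x y : A}, x ∈ s₁ → x * y ∈ s₁ := by
    rintro x y ⟨a, rfl⟩
    obtain ⟨a', b', rfl⟩ := hdecomp y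
    refine ⟨a * a', ?_⟩
    have : ψ (a, 0) * (ψ (a', 0) + ψ (0, b')) = ψ (a * a', 0) := by
      rw [mul_add, h10, add_zero, ← hmul, Prod.mk_mul_mk, mul_zero]
    exact this.symm ▸ rfl
  have ml2 : ∀ {x y : A}, y ∈ s₂ → x * y ∈ s₂ := by
    rintro x y ⟨b, rfl⟩
    obtain ⟨a', b', rfl⟩ := hdecomp x
    refine ⟨b' * b, ?_⟩
    have : (ψ (a', 0) + ψ (0, b')) * ψ (0, b) = ψ (0, b' * b) := by
      rw [add_mul, h10, zero_add, ← hmul, Prod.mk_mul_mk, mul_zero]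
    exact this.symm ▸ rfl
  have mr2 : ∀ {x y : A}, x ∈ s₂ → x * y ∈ s₂ := by
    rintro x y ⟨b, rfl⟩
    obtain ⟨a', b', rfl⟩ := hdecomp y
    refine ⟨b * b', ?_⟩
    have : ψ (0, b) * (ψ (a', 0) + ψ (0, b')) = ψ (0, b * b') := by
      rw [mul_add, h01, zero_add, ← hmul, Prod.mk_mul_mk, mul_zero]
    exact this.symm ▸ rfl
  -- the ranges are closed: they are annihilators of each other
  have hs₁ann : s₁ = ⋂ b : A, {c : A | c * ψ (0, b) = 0} := by
    ext c
    simp only [Set.mem_iInter, Set.mem_setOf_eq, hs₁]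
    constructor
    · rintro ⟨a, rfl⟩ b; exact h10 a b
    · intro h
      obtain ⟨a, b, rfl⟩ := hdecomp c
      have hb := h (star b)
      rw [add_mul, h10, zero_add, hstar2, CStarRing.mul_star_self_eq_zero_iff] at hb
      exact ⟨a, by rw [hb, add_zero]⟩
  have hs₂ann : s₂ = ⋂ a : A, {c : A | c * ψ (a, 0) = 0} := by
    ext c
    simp only [Set.mem_iInter, Set.mem_setOf_eq, hs₂]
    constructor
    · rintro ⟨b, rfl⟩ a; exact h01 b a
    · intro h
      obtain ⟨a, b, rfl⟩ := hdecomp c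
      have ha := h (star a)
      rw [add_mul, h01, add_zero, hstar1, CStarRing.mul_star_self_eq_zero_iff] at ha
      exact ⟨b, by rw [ha, zero_add]⟩
  have hc1 : IsClosed s₁ := by
    rw [hs₁ann]
    exact isClosed_iInter fun b =>
      isClosed_eq (continuous_id.mul continuous_const) continuous_const
  have hc2 : IsClosed s₂ := by
    rw [hs₂ann]
    exact isClosed_iInter fun a =>
      isClosed_eq (continuous_id.mul continuous_const) continuous_const
  set I₁ : TwoSidedIdeal A := TwoSidedIdeal.mk' s₁ z1 a1 n1 ml1 mr1 with hI₁
  set I₂ : TwoSidedIdeal A := TwoSidedIdeal.mk' s₂ z2 a2 n2 ml2 mr2 with hI₂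
  rcases hsimple I₂ (by rw [hI₂, TwoSidedIdeal.coe_mk']; exact hc2) with h2 | h2
  · left
    intro b
    have : ψ (0, b) ∈ I₂ := by
      rw [hI₂, TwoSidedIdeal.mem_mk']; exact ⟨b, rfl⟩
    rw [h2, TwoSidedIdeal.mem_bot] at this
    exact this
  · rcases hsimple I₁ (by rw [hI₁, TwoSidedIdeal.coe_mk']; exact hc1) with h1 | h1
    · right
      intro a
      have : ψ (a, 0) ∈ I₁ := by
        rw [hI₁, TwoSidedIdeal.mem_mk']; exact ⟨a, rfl⟩
      rw [h1, TwoSidedIdeal.mem_bot] at this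
      exact this
    · -- both top: contradiction
      exfalso
      obtain ⟨c, hc⟩ := exists_ne (0 : A)
      have hcI : c ∈ I₁ := by rw [h1]; exact TwoSidedIdeal.mem_top A
      rw [hI₁, TwoSidedIdeal.mem_mk'] at hcI
      obtain ⟨a, ha⟩ := hcI
      have hscI : star c ∈ I₂ := by rw [h2]; exact TwoSidedIdeal.mem_top A
      rw [hI₂, TwoSidedIdeal.mem_mk'] at hscI
      obtain ⟨b, hb⟩ := hscI
      have : c * star c = 0 := by rw [← hb, ← ha]; exact h10 a b
      exact hc (CStarRing.mul_star_self_eq_zero_iff c |>.mp this)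

/-- Let `A` be a non-zero simple C*-algebra (its only closed two-sided ideals are `0` and `A`).
Every `ℂ`-linear star-algebra automorphism `γ` of the product C*-algebra `A × A` is either of
the form `γ(a, b) = (α(a), β(b))` or of the form `γ(a, b) = (α(b), β(a))` for some star-algebra
automorphisms `α, β` of `A`. -/
theorem starAlgEquiv_prod_simple_form (A : Type*) [NonUnitalCStarAlgebra A] [Nontrivial A]
    (hsimple : ∀ I : TwoSidedIdeal A, IsClosed (I : Set A) → I = ⊥ ∨ I = ⊤)
    (γ : (A × A) ≃⋆ₐ[ℂ] (A × A)) :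
    ∃ α β : A ≃⋆ₐ[ℂ] A,
      (∀ a b : A, γ (a, b) = (α a, β b)) ∨ (∀ a b : A, γ (a, b) = (α b, β a)) := by
  have hψ1 := proj_dichotomy hsimple (fun p => (γ p).1)
    (fun x y => by show (γ (x + y)).1 = (γ x).1 + (γ y).1; rw [map_add]; rfl)
    (fun x y => by show (γ (x * y)).1 = (γ x).1 * (γ y).1; rw [map_mul]; rfl)
    (fun x => by show (γ (star x)).1 = star (γ x).1; rw [map_star]; rfl)
    (fun c => ⟨γ.symm (c, 0), by show (γ (γ.symm (c, 0))).1 = c; rw [γ.apply_symm_apply]⟩)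
  have hψ2 := proj_dichotomy hsimple (fun p => (γ p).2)
    (fun x y => by show (γ (x + y)).2 = (γ x).2 + (γ y).2; rw [map_add]; rfl)
    (fun x y => by show (γ (x * y)).2 = (γ x).2 * (γ y).2; rw [map_mul]; rfl)
    (fun x => by show (γ (star x)).2 = star (γ x).2; rw [map_star]; rfl)
    (fun c => ⟨γ.symm (0, c), by show (γ (γ.symm (0, c))).2 = c; rw [γ.apply_symm_apply]⟩)
  -- an element b ≠ 0 for contradictions
  obtain ⟨c₀, hc₀⟩ := exists_ne (0 : A)
  rcases hψ1 with h1 | h1 <;> rcases hψ2 with h2 | h2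
  · -- (γ (0,b)).1 = 0 and (γ (0,b)).2 = 0 : impossible
    exfalso
    have h1' : ∀ b : A, (γ (0, b)).1 = 0 := h1
    have h2' : ∀ b : A, (γ (0, b)).2 = 0 := h2
    have hz : γ (0, c₀) = γ 0 := by
      rw [map_zero]; exact Prod.ext (h1' c₀) (h2' c₀)
    have := γ.injective hz
    exact hc₀ ((Prod.ext_iff.mp this).2)
  · -- diagonal form: (γ (0,b)).1 = 0, (γ (a,0)).2 = 0
    have hγa : ∀ a : A, γ (a, 0) = ((γ (a, 0)).1, 0) := fun a => Prod.ext rfl (h2 a)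
    have hγb : ∀ b : A, γ (0, b) = (0, (γ (0, b)).2) := fun b => Prod.ext (h1 b) rfl
    have hform : ∀ a b : A, γ (a, b) = ((γ (a, 0)).1, (γ (0, b)).2) := by
      intro a b
      have e : ((a, b) : A × A) = (a, 0) + (0, b) := by simp
      rw [e, map_add, hγa, hγb, Prod.mk_add_mk, add_zero, zero_add]
    have h2' : ∀ a : A, (γ (a, 0)).2 = 0 := h2
    have h1' : ∀ b : A, (γ (0, b)).1 = 0 := h1
    have hfinj : Function.Injective (fun a => (γ (a, 0)).1) := by
      intro a a' h
      have e : γ (a, 0) = γ (a', 0) := Prod.ext h (by rw [h2' a, h2' a'])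
      simpa [Prod.ext_iff] using γ.injective e
    have hfsurj : Function.Surjective (fun a => (γ (a, 0)).1) := by
      intro c
      obtain ⟨p, hp⟩ := γ.surjective (c, 0)
      refine ⟨p.1, ?_⟩
      have h2' := (hform p.1 p.2).symm.trans hp
      exact (Prod.ext_iff.mp h2').1
    have hginj : Function.Injective (fun b => (γ (0, b)).2) := by
      intro b b' h
      have e : γ (0, b) = γ (0, b') := Prod.ext (by rw [h1' b, h1' b']) h
      simpa [Prod.ext_iff] using γ.injective e
    have hgsurj : Function.Surjective (fun b => (γ (0, b)).2) := by
      intro d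
      obtain ⟨p, hp⟩ := γ.surjective (0, d)
      refine ⟨p.2, ?_⟩
      have h2' := (hform p.1 p.2).symm.trans hp
      exact (Prod.ext_iff.mp h2').2
    obtain ⟨α, hα⟩ := exists_starAlgEquiv_of_bijective (fun a => (γ (a, 0)).1)
      ⟨hfinj, hfsurj⟩
      (fun x y => by
        show (γ (x + y, 0)).1 = (γ (x, 0)).1 + (γ (y, 0)).1
        rw [show ((x + y, 0) : A × A) = (x, 0) + (y, 0) by simp, map_add]; rfl)
      (fun x y => by
        show (γ (x * y, 0)).1 = (γ (x, 0)).1 * (γ (y, 0)).1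
        rw [show ((x * y, 0) : A × A) = (x, 0) * (y, 0) by rw [Prod.mk_mul_mk, mul_zero],
          map_mul]; rfl)
      (fun x => by
        show (γ (star x, 0)).1 = star (γ (x, 0)).1
        rw [show ((star x, 0) : A × A) = star (x, 0) by simp [Prod.star_def],
          map_star]; rfl)
      (fun c x => by
        show (γ (c • x, 0)).1 = c • (γ (x, 0)).1
        rw [show ((c • x, 0) : A × A) = c • (x, 0) by rw [Prod.smul_mk, smul_zero],
          map_smul]; rfl)
    obtain ⟨β, hβ⟩ := exists_starAlgEquiv_of_bijective (fun b => (γ (0, b)).2)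
      ⟨hginj, hgsurj⟩
      (fun x y => by
        show (γ (0, x + y)).2 = (γ (0, x)).2 + (γ (0, y)).2
        rw [show ((0, x + y) : A × A) = (0, x) + (0, y) by simp, map_add]; rfl)
      (fun x y => by
        show (γ (0, x * y)).2 = (γ (0, x)).2 * (γ (0, y)).2
        rw [show ((0, x * y) : A × A) = (0, x) * (0, y) by rw [Prod.mk_mul_mk, zero_mul],
          map_mul]; rfl)
      (fun x => by
        show (γ (0, star x)).2 = star (γ (0, x)).2
        rw [show ((0, star x) : A × A) = star (0, x) by simp [Prod.star_def],
          map_star]; rfl)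
      (fun c x => by
        show (γ (0, c • x)).2 = c • (γ (0, x)).2
        rw [show ((0, c • x) : A × A) = c • (0, x) by rw [Prod.smul_mk, smul_zero],
          map_smul]; rfl)
    exact ⟨α, β, Or.inl fun a b => by rw [hform, hα, hβ]⟩
  · -- swapped form: (γ (a,0)).1 = 0, (γ (0,b)).2 = 0
    have hγa : ∀ a : A, γ (a, 0) = (0, (γ (a, 0)).2) := fun a => Prod.ext (h1 a) rfl
    have hγb : ∀ b : A, γ (0, b) = ((γ (0, b)).1, 0) := fun b => Prod.ext rfl (h2 b)
    have hform : ∀ a b : A, γ (a, b) = ((γ (0, b)).1, (γ (a, 0)).2) := by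
      intro a b
      have e : ((a, b) : A × A) = (a, 0) + (0, b) := by simp
      rw [e, map_add, hγa, hγb, Prod.mk_add_mk, add_zero, zero_add]
    have h1' : ∀ a : A, (γ (a, 0)).1 = 0 := h1
    have h2' : ∀ b : A, (γ (0, b)).2 = 0 := h2
    have hfinj : Function.Injective (fun b => (γ (0, b)).1) := by
      intro b b' h
      have e : γ (0, b) = γ (0, b') := Prod.ext h (by rw [h2' b, h2' b'])
      simpa [Prod.ext_iff] using γ.injective e
    have hfsurj : Function.Surjective (fun b => (γ (0, b)).1) := by
      intro c
      obtain ⟨p, hp⟩ := γ.surjective (c, 0)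
      refine ⟨p.2, ?_⟩
      have h2' := (hform p.1 p.2).symm.trans hp
      exact (Prod.ext_iff.mp h2').1
    have hginj : Function.Injective (fun a => (γ (a, 0)).2) := by
      intro a a' h
      have e : γ (a, 0) = γ (a', 0) := Prod.ext (by rw [h1' a, h1' a']) h
      simpa [Prod.ext_iff] using γ.injective e
    have hgsurj : Function.Surjective (fun a => (γ (a, 0)).2) := by
      intro d
      obtain ⟨p, hp⟩ := γ.surjective (0, d)
      refine ⟨p.1, ?_⟩
      have h2' := (hform p.1 p.2).symm.trans hp
      exact (Prod.ext_iff.mp h2').2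
    obtain ⟨α, hα⟩ := exists_starAlgEquiv_of_bijective (fun b => (γ (0, b)).1)
      ⟨hfinj, hfsurj⟩
      (fun x y => by
        show (γ (0, x + y)).1 = (γ (0, x)).1 + (γ (0, y)).1
        rw [show ((0, x + y) : A × A) = (0, x) + (0, y) by simp, map_add]; rfl)
      (fun x y => by
        show (γ (0, x * y)).1 = (γ (0, x)).1 * (γ (0, y)).1
        rw [show ((0, x * y) : A × A) = (0, x) * (0, y) by rw [Prod.mk_mul_mk, zero_mul],
          map_mul]; rfl)
      (fun x => by
        show (γ (0, star x)).1 = star (γ (0, x)).1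
        rw [show ((0, star x) : A × A) = star (0, x) by simp [Prod.star_def],
          map_star]; rfl)
      (fun c x => by
        show (γ (0, c • x)).1 = c • (γ (0, x)).1
        rw [show ((0, c • x) : A × A) = c • (0, x) by rw [Prod.smul_mk, smul_zero],
          map_smul]; rfl)
    obtain ⟨β, hβ⟩ := exists_starAlgEquiv_of_bijective (fun a => (γ (a, 0)).2)
      ⟨hginj, hgsurj⟩
      (fun x y => by
        show (γ (x + y, 0)).2 = (γ (x, 0)).2 + (γ (y, 0)).2
        rw [show ((x + y, 0) : A × A) = (x, 0) + (y, 0) by simp, map_add]; rfl)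
      (fun x y => by
        show (γ (x * y, 0)).2 = (γ (x, 0)).2 * (γ (y, 0)).2
        rw [show ((x * y, 0) : A × A) = (x, 0) * (y, 0) by rw [Prod.mk_mul_mk, mul_zero],
          map_mul]; rfl)
      (fun x => by
        show (γ (star x, 0)).2 = star (γ (x, 0)).2
        rw [show ((star x, 0) : A × A) = star (x, 0) by simp [Prod.star_def],
          map_star]; rfl)
      (fun c x => by
        show (γ (c • x, 0)).2 = c • (γ (x, 0)).2
        rw [show ((c • x, 0) : A × A) = c • (x, 0) by rw [Prod.smul_mk, smul_zero],
          map_smul]; rfl)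
    exact ⟨α, β, Or.inr fun a b => by rw [hform, hα, hβ]⟩
  · -- (γ (a,0)).1 = 0 and (γ (a,0)).2 = 0 : impossible
    exfalso
    have h1' : ∀ a : A, (γ (a, 0)).1 = 0 := h1
    have h2' : ∀ a : A, (γ (a, 0)).2 = 0 := h2
    have hz : γ (c₀, 0) = γ 0 := by
      rw [map_zero]; exact Prod.ext (h1' c₀) (h2' c₀)
    have := γ.injective hz
    exact hc₀ ((Prod.ext_iff.mp this).1)
end

section
/- Let A be a non-zero C*-algebra (possibly non-unital) that is simple, i.e. whose only closed two-sided ideals are 0 and A, and let σ denote the swap automorphism of the product C*-algebra A × A, σ(a, b) = (b, a). Then the map Ψ from ℤ/2 × Aut(A) to the group of ℂ-linear star-algebra automorphisms γ of A × A satisfying γ ∘ σ = σ ∘ γ, defined by Ψ(0, α)(a, b) = (α(a), α(b)) and Ψ(1, α)(a, b) = (α(b), α(a)), is a group isomorphism (where ℤ/2 × Aut(A) carries the direct product group structure and Aut(A) denotes the group of ℂ-linear star-algebra automorphisms of A). -/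
section Aux

variable {A : Type*} [NonUnitalCStarAlgebra A]

/-- Componentwise automorphism of `A × A` from an automorphism of `A`. -/
private def dblAux (α : A ≃⋆ₐ[ℂ] A) : (A × A) ≃⋆ₐ[ℂ] (A × A) where
  toFun p := (α p.1, α p.2)
  invFun p := (α.symm p.1, α.symm p.2)
  left_inv p := by simp
  right_inv p := by simp
  map_mul' p q := by simp [Prod.mul_def]
  map_add' p q := by simp [Prod.add_def]
  map_smul' c p := by simp [Prod.smul_def]
  map_star' p := by simp [Prod.star_def, map_star]

/-- The swap automorphism of `A × A`. -/
private def swapAux : (A × A) ≃⋆ₐ[ℂ] (A × A) where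
  toFun := Prod.swap
  invFun := Prod.swap
  left_inv _ := rfl
  right_inv _ := rfl
  map_mul' _ _ := rfl
  map_add' _ _ := rfl
  map_smul' _ _ := rfl
  map_star' _ := rfl

@[simp] private lemma dblAux_apply (α : A ≃⋆ₐ[ℂ] A) (p : A × A) :
    dblAux α p = (α p.1, α p.2) := rfl

@[simp] private lemma swapAux_apply (p : A × A) : (swapAux : (A × A) ≃⋆ₐ[ℂ] (A × A)) p = p.swap :=
  rfl

end Aux

/-- Let `A` be a non-zero simple C*-algebra and `σ` the swap automorphism of `A × A`.
The map `Ψ : ℤ/2 × Aut(A) → {γ ∈ Aut(A × A) | γ ∘ σ = σ ∘ γ}` given by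
`Ψ(0, α)(a, b) = (α a, α b)` and `Ψ(1, α)(a, b) = (α b, α a)` is a group isomorphism:
it takes values in the commutant of `σ`, is multiplicative for the direct product group
structure (where automorphisms compose), is injective, and is surjective onto the set of
star-algebra automorphisms of `A × A` commuting with `σ`. -/
theorem group_iso_swap_commutant (A : Type*) [NonUnitalCStarAlgebra A] [Nontrivial A]
    (hsimple : ∀ I : TwoSidedIdeal A, IsClosed (I : Set A) → I = ⊥ ∨ I = ⊤) :
    ∃ Ψ : ZMod 2 × (A ≃⋆ₐ[ℂ] A) → ((A × A) ≃⋆ₐ[ℂ] (A × A)),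
      (∀ (α : A ≃⋆ₐ[ℂ] A) (a b : A), Ψ (0, α) (a, b) = (α a, α b)) ∧
      (∀ (α : A ≃⋆ₐ[ℂ] A) (a b : A), Ψ (1, α) (a, b) = (α b, α a)) ∧
      (∀ (x y : ZMod 2) (α β : A ≃⋆ₐ[ℂ] A) (p : A × A),
        Ψ (x + y, β.trans α) p = Ψ (x, α) (Ψ (y, β) p)) ∧
      Function.Injective Ψ ∧
      (∀ (t : ZMod 2 × (A ≃⋆ₐ[ℂ] A)) (p : A × A), Ψ t (Prod.swap p) = Prod.swap (Ψ t p)) ∧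
      (∀ γ : (A × A) ≃⋆ₐ[ℂ] (A × A),
        (∀ p : A × A, γ (Prod.swap p) = Prod.swap (γ p)) → ∃ t, Ψ t = γ) := by
  classical
  set Ψ : ZMod 2 × (A ≃⋆ₐ[ℂ] A) → ((A × A) ≃⋆ₐ[ℂ] (A × A)) :=
    fun t => if t.1 = 0 then dblAux t.2 else (dblAux t.2).trans swapAux with hΨ
  have hzm : ∀ x : ZMod 2, x = 0 ∨ x = 1 := by decide
  have h10 : (1 : ZMod 2) ≠ 0 := by decide
  have hΨ0 : ∀ (α : A ≃⋆ₐ[ℂ] A) (a b : A), Ψ (0, α) (a, b) = (α a, α b) := by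
    intro α a b; simp [hΨ]
  have hΨ1 : ∀ (α : A ≃⋆ₐ[ℂ] A) (a b : A), Ψ (1, α) (a, b) = (α b, α a) := by
    intro α a b; simp [hΨ, h10, StarAlgEquiv.trans_apply]
  refine ⟨Ψ, hΨ0, hΨ1, ?_, ?_, ?_, ?_⟩
  · -- multiplicativity
    intro x y α β p
    obtain ⟨a, b⟩ := p
    rcases hzm x with hx | hx <;> rcases hzm y with hy | hy <;> subst hx <;> subst hy <;>
      simp [hΨ0, hΨ1, show (0 : ZMod 2) + 0 = 0 from by decide,
        show (0 : ZMod 2) + 1 = 1 from by decide, show (1 : ZMod 2) + 0 = 1 from by decide,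
        show (1 : ZMod 2) + 1 = 0 from by decide, StarAlgEquiv.trans_apply]
  · -- injectivity
    intro ⟨x, α⟩ ⟨y, β⟩ hxy
    obtain ⟨a, ha⟩ := exists_ne (0 : A)
    have key : ∀ c : A, Ψ (x, α) (c, 0) = Ψ (y, β) (c, 0) := fun c => by rw [hxy]
    have hzero : ∀ (η : A ≃⋆ₐ[ℂ] A), ¬ (∀ c : A, η c = 0) := by
      intro η hη
      have : η a = η 0 := by rw [hη a, map_zero]
      exact ha (η.injective this)
    rcases hzm x with hx | hx <;> rcases hzm y with hy | hy <;> subst hx <;> subst hy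
    · have : ∀ c, α c = β c := fun c => by
        have := key c; rw [hΨ0, hΨ0] at this; exact (Prod.ext_iff.1 this).1
      exact Prod.ext rfl (StarAlgEquiv.ext this)
    · exfalso
      refine hzero α fun c => ?_
      have := key c; rw [hΨ0, hΨ1] at this
      simpa using (Prod.ext_iff.1 this).1
    · exfalso
      refine hzero β fun c => ?_
      have := key c; rw [hΨ1, hΨ0] at this
      simpa using (Prod.ext_iff.1 this).1.symm
    · have : ∀ c, α c = β c := fun c => by
        have := key c; rw [hΨ1, hΨ1] at this
        exact (Prod.ext_iff.1 this).2
      exact Prod.ext rfl (StarAlgEquiv.ext this)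
  · -- commutes with swap
    intro ⟨x, α⟩ ⟨a, b⟩
    rcases hzm x with hx | hx <;> subst hx <;>
      simp [hΨ0, hΨ1, Prod.swap]
  · -- surjectivity
    intro γ hγ
    set f : A → A := fun a => (γ (a, 0)).1 with hf
    set g : A → A := fun a => (γ (a, 0)).2 with hg
    have hγ0 : ∀ a : A, γ (a, 0) = (f a, g a) := fun a => rfl
    have hγ0' : ∀ a : A, γ (0, a) = (g a, f a) := by
      intro a
      have := hγ (a, 0)
      simpa [Prod.swap, hγ0 a, Prod.ext_iff] using this
    have hγab : ∀ a b : A, γ (a, b) = (f a + g b, g a + f b) := by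
      intro a b
      have : ((a, b) : A × A) = (a, 0) + (0, b) := by simp
      rw [this, map_add, hγ0, hγ0', Prod.mk_add_mk]
    have h00 : γ ((0 : A), (0 : A)) = ((0 : A), (0 : A)) := by
      rw [show (((0 : A), (0 : A)) : A × A) = (0 : A × A) from rfl, map_zero]
    have hf0 : f 0 = 0 := by
      have := hγ0 0
      rw [h00] at this
      exact ((Prod.ext_iff.1 this).1).symm
    have hg0 : g 0 = 0 := by
      have := hγ0 0
      rw [h00] at this
      exact ((Prod.ext_iff.1 this).2).symm
    -- multiplicativity and orthogonality
    have hmul : ∀ a b : A, f (a * b) = f a * f b ∧ g (a * b) = g a * g b := by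
      intro a b
      have : γ ((a, 0) * (b, 0)) = γ (a, 0) * γ (b, 0) := map_mul γ _ _
      rw [Prod.mk_mul_mk, mul_zero, hγ0, hγ0, hγ0, Prod.mk_mul_mk] at this
      exact Prod.ext_iff.1 this
    have horth : ∀ a b : A, f a * g b = 0 ∧ g a * f b = 0 := by
      intro a b
      have : γ ((a, 0) * (0, b)) = γ (a, 0) * γ (0, b) := map_mul γ _ _
      rw [Prod.mk_mul_mk, mul_zero, zero_mul, h00, hγ0, hγ0', Prod.mk_mul_mk] at this
      refine ⟨?_, ?_⟩
      · exact ((Prod.ext_iff.1 this).1).symm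
      · exact ((Prod.ext_iff.1 this).2).symm
    have hadd : ∀ a b : A, f (a + b) = f a + f b ∧ g (a + b) = g a + g b := by
      intro a b
      have : γ ((a, 0) + (b, 0)) = γ (a, 0) + γ (b, 0) := map_add γ _ _
      rw [Prod.mk_add_mk, add_zero, hγ0, hγ0, hγ0, Prod.mk_add_mk] at this
      exact Prod.ext_iff.1 this
    have hsmul : ∀ (c : ℂ) (a : A), f (c • a) = c • f a ∧ g (c • a) = c • g a := by
      intro c a
      have : γ (c • (a, 0)) = c • γ (a, 0) := map_smul γ c _
      rw [Prod.smul_mk, smul_zero, hγ0, hγ0, Prod.smul_mk] at this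
      exact Prod.ext_iff.1 this
    have hstar : ∀ a : A, f (star a) = star (f a) ∧ g (star a) = star (g a) := by
      intro a
      have : γ (star (a, 0)) = star (γ (a, 0)) := map_star γ _
      rw [Prod.star_def, star_zero, hγ0, hγ0, Prod.star_def] at this
      exact Prod.ext_iff.1 this
    -- the automorphism h = f + g
    set h : A → A := fun a => f a + g a with hh
    have hγdiag : ∀ a : A, γ (a, a) = (h a, h a) := by
      intro a
      rw [hγab]
      exact Prod.ext rfl (add_comm _ _)
    have hsymmswap : ∀ p : A × A, γ.symm (Prod.swap p) = Prod.swap (γ.symm p) := by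
      intro p
      have h1 : γ (Prod.swap (γ.symm p)) = Prod.swap p := by rw [hγ, γ.apply_symm_apply]
      calc γ.symm (Prod.swap p) = γ.symm (γ (Prod.swap (γ.symm p))) := by rw [h1]
        _ = Prod.swap (γ.symm p) := γ.symm_apply_apply _
    set hinv : A → A := fun c => (γ.symm (c, c)).1 with hhinv
    have hdiag : ∀ c : A, γ.symm (c, c) = (hinv c, hinv c) := by
      intro c
      have := hsymmswap (c, c)
      have h2 : (γ.symm (c, c)).2 = (γ.symm (c, c)).1 := by
        have h3 := congrArg Prod.fst this
        simpa [Prod.swap] using h3.symm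
      exact Prod.ext rfl h2
    have hhinvh : ∀ c : A, h (hinv c) = c := by
      intro c
      have : γ (hinv c, hinv c) = (c, c) := by rw [← hdiag, γ.apply_symm_apply]
      rw [hγdiag] at this
      exact (Prod.ext_iff.1 this).1
    have hinvhh : ∀ a : A, hinv (h a) = a := by
      intro a
      have : γ.symm (h a, h a) = (a, a) := by rw [← hγdiag, γ.symm_apply_apply]
      rw [hdiag] at this
      exact (Prod.ext_iff.1 this).1
    have hinj : Function.Injective h := Function.LeftInverse.injective hinvhh
    have hmulh : ∀ a b : A, h (a * b) = h a * h b := by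
      intro a b
      show f (a * b) + g (a * b) = (f a + g a) * (f b + g b)
      rw [(hmul a b).1, (hmul a b).2, mul_add, add_mul, add_mul, (horth a b).1, (horth a b).2]
      abel
    have haddh : ∀ a b : A, h (a + b) = h a + h b := by
      intro a b
      show f (a + b) + g (a + b) = (f a + g a) + (f b + g b)
      rw [(hadd a b).1, (hadd a b).2]; abel
    have hsmulh : ∀ (c : ℂ) (a : A), h (c • a) = c • h a := by
      intro c a
      show f (c • a) + g (c • a) = c • (f a + g a)
      rw [(hsmul c a).1, (hsmul c a).2, smul_add]
    have hstarh : ∀ a : A, h (star a) = star (h a) := by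
      intro a
      show f (star a) + g (star a) = star (f a + g a)
      rw [(hstar a).1, (hstar a).2, star_add]
    have hh0 : h 0 = 0 := by show f 0 + g 0 = 0; rw [hf0, hg0, add_zero]
    have hinv0 : hinv 0 = 0 := by
      have := hinvhh 0; rwa [hh0] at this
    have hinvmul : ∀ x y : A, hinv (x * y) = hinv x * hinv y := by
      intro x y
      apply hinj
      rw [hhinvh, hmulh, hhinvh, hhinvh]
    have hinvadd : ∀ x y : A, hinv (x + y) = hinv x + hinv y := by
      intro x y
      apply hinj
      rw [hhinvh, haddh, hhinvh, hhinvh]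
    -- the reduction maps k = h⁻¹ ∘ f, l = h⁻¹ ∘ g
    set k : A → A := fun a => hinv (f a) with hk
    set l : A → A := fun a => hinv (g a) with hl
    have hkl : ∀ a b : A, k a * l b = 0 := by
      intro a b
      show hinv (f a) * hinv (g b) = 0
      rw [← hinvmul, (horth a b).1, hinv0]
    have hlk : ∀ a b : A, l a * k b = 0 := by
      intro a b
      show hinv (g a) * hinv (f b) = 0
      rw [← hinvmul, (horth a b).2, hinv0]
    have hsum : ∀ b : A, k b + l b = b := by
      intro b
      show hinv (f b) + hinv (g b) = b
      rw [← hinvadd]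
      exact hinvhh b
    have hk0 : k 0 = 0 := by show hinv (f 0) = 0; rw [hf0, hinv0]
    have hkb : ∀ x b : A, k x * b = k (x * b) := by
      intro x b
      calc k x * b = hinv (f x) * hinv (h b) := by rw [hinvhh]
        _ = hinv (f x * h b) := (hinvmul _ _).symm
        _ = hinv (f (x * b)) := by
            congr 1
            show f x * (f b + g b) = f (x * b)
            rw [mul_add, (horth x b).1, add_zero, (hmul x b).1]
        _ = k (x * b) := rfl
    have hdz : ∀ a : A, k (l a) = 0 := by
      intro a
      have hdb : ∀ b : A, k (l a) * b = 0 := by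
        intro b
        have e1 : k (l a) * b = k (l a) * k b + k (l a) * l b := by rw [← mul_add, hsum]
        have e2 : k (l a) * k b = 0 := by rw [hkb, hlk, hk0]
        rw [e1, e2, hkl, add_zero]
      have h1 : k (l a) * star (k (l a)) = 0 := hdb _
      have h2 : ‖k (l a)‖ = 0 := by
        have h3 := CStarRing.norm_self_mul_star (x := k (l a))
        rw [h1, norm_zero] at h3
        exact mul_self_eq_zero.mp h3.symm
      exact norm_eq_zero.mp h2
    have hfl : ∀ a : A, f (l a) = 0 := by
      intro a
      have h1 : hinv (f (l a)) = 0 := hdz a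
      have h2 := congrArg h h1
      rwa [hhinvh, hh0] at h2
    -- the kernel of f is a closed two-sided ideal
    have hnegf : ∀ x : A, f x = 0 → f (-x) = 0 := by
      intro x hx
      have h1 : f (x + -x) = f x + f (-x) := (hadd x (-x)).1
      rw [add_neg_cancel, hf0, hx, zero_add] at h1
      exact h1.symm
    set I : TwoSidedIdeal A := TwoSidedIdeal.mk' {a | f a = 0} hf0
      (fun {x y} hx hy => by
        simp only [Set.mem_setOf_eq] at *
        rw [(hadd x y).1, hx, hy, add_zero])
      (fun {x} hx => by
        simp only [Set.mem_setOf_eq] at *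
        exact hnegf x hx)
      (fun {x y} hy => by
        simp only [Set.mem_setOf_eq] at *
        rw [(hmul x y).1, hy, mul_zero])
      (fun {x y} hx => by
        simp only [Set.mem_setOf_eq] at *
        rw [(hmul x y).1, hx, zero_mul]) with hI
    have hmemI : ∀ x : A, x ∈ I ↔ f x = 0 := by
      intro x
      rw [hI, TwoSidedIdeal.mem_mk']
      rfl
    have hγc : Continuous γ := (NonUnitalStarAlgHom.isometry γ γ.injective).continuous
    have hfc : Continuous f := by
      have : Continuous fun a : A => γ (a, 0) :=
        hγc.comp (continuous_id.prodMk continuous_const)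
      exact this.fst
    have hIclosed : IsClosed (I : Set A) := by
      have hcoe : (I : Set A) = f ⁻¹' {0} := by
        ext x
        rw [SetLike.mem_coe, hmemI]
        simp
      rw [hcoe]
      exact isClosed_singleton.preimage hfc
    -- construct the automorphism hAut of A
    set hAut : A ≃⋆ₐ[ℂ] A :=
      { toFun := h, invFun := hinv, left_inv := hinvhh, right_inv := hhinvh,
        map_mul' := hmulh, map_add' := haddh, map_smul' := hsmulh, map_star' := hstarh } with hhAut
    have hhAuta : ∀ a : A, hAut a = h a := fun a => rfl
    rcases hsimple I hIclosed with hbot | htop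
    · -- kernel of f is trivial: g = 0 and γ = Ψ (0, hAut)
      have hgz : ∀ a : A, g a = 0 := by
        intro a
        have h1 : l a ∈ I := (hmemI _).2 (hfl a)
        rw [hbot, TwoSidedIdeal.mem_bot] at h1
        have h2 : hinv (g a) = 0 := h1
        have h3 := congrArg h h2
        rwa [hhinvh, hh0] at h3
      refine ⟨(0, hAut), StarAlgEquiv.ext fun p => ?_⟩
      obtain ⟨a, b⟩ := p
      rw [hΨ0, hγab, hhAuta, hhAuta]
      refine Prod.ext ?_ ?_
      · show f a + g a = f a + g b
        rw [hgz, hgz]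
      · show f b + g b = g a + f b
        rw [hgz, hgz, add_comm]
    · -- kernel of f is everything: f = 0 and γ = Ψ (1, hAut)
      have hfz : ∀ a : A, f a = 0 := by
        intro a
        refine (hmemI a).1 ?_
        rw [htop]
        exact TwoSidedIdeal.mem_top A
      refine ⟨(1, hAut), StarAlgEquiv.ext fun p => ?_⟩
      obtain ⟨a, b⟩ := p
      rw [hΨ1, hγab, hhAuta, hhAuta]
      refine Prod.ext ?_ ?_
      · show f b + g b = f a + g b
        rw [hfz, hfz]
      · show f a + g a = g a + f b
        rw [hfz, hfz, zero_add, add_zero]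
end

section
/- In the complex Clifford algebra Cl₂, set f₁₁ = (1 + i·e₁e₂)/2, f₂₂ = (1 − i·e₁e₂)/2, f₁₂ = f₁₁·e₁, f₂₁ = e₁·f₁₁. Then: (i) f₁₁ and f₂₂ lie in the even part of Cl₂ and f₁₂ and f₂₁ lie in the odd part; (ii) f₁₁ + f₂₂ = 1 and f_{ij}·f_{kl} = f_{il} if j = k and = 0 if j ≠ k, for all i, j, k, l ∈ {1, 2}; (iii) the unique ℂ-algebra homomorphism M₂(ℂ) → Cl₂ sending the matrix unit E_{ij} to f_{ij} is an algebra isomorphism; and (iv) under this isomorphism, the automorphism of M₂(ℂ) given by conjugation by diag(1, −1) (equivalently, negation of the off-diagonal entries) corresponds to the grading automorphism involute of Cl₂. -/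
open CliffordAlgebra

noncomputable section

/-- The quadratic form `x₁² + ⋯ + x_n²` on `ℂⁿ`. -/
def Qc (n : ℕ) : QuadraticForm ℂ (Fin n → ℂ) :=
  QuadraticMap.weightedSumSquares ℂ fun _ : Fin n => (1 : ℂ)

/-- The complex Clifford algebra `Cl n`. -/
abbrev Cl (n : ℕ) : Type := CliffordAlgebra (Qc n)

/-- The standard generators `e n i` of `Cl n`. -/
def e (n : ℕ) (i : Fin n) : Cl n := CliffordAlgebra.ι (Qc n) (Pi.single i 1)

/-- `f₁₁ = (1 + i·e₁e₂)/2` in `Cl 2`. -/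
def f11 : Cl 2 := (2 : ℂ)⁻¹ • (1 + Complex.I • (e 2 0 * e 2 1))

/-- `f₂₂ = (1 − i·e₁e₂)/2` in `Cl 2`. -/
def f22 : Cl 2 := (2 : ℂ)⁻¹ • (1 - Complex.I • (e 2 0 * e 2 1))

/-- The matrix-unit elements `f_{ij}` of `Cl 2`: `f₁₂ = f₁₁·e₁` and `f₂₁ = e₁·f₁₁`. -/
def f : Fin 2 → Fin 2 → Cl 2 := fun i j =>
  if i = 0 then (if j = 0 then f11 else f11 * e 2 0)
  else (if j = 0 then e 2 0 * f11 else f22)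

/-!
In `Cl₂` the element `u = e₁e₂` squares to `-1`, so `p = f₁₁ = (1 + iu)/2` is an idempotent with
complement `f₂₂ = 1 - p`; since `e₁` anticommutes with `u`, `e₁ p e₁ = 1 - p` and `p e₁ p = 0`.
Hence `f_{ij} = e₁^i p e₁^j` is a system of `2 × 2` matrix units summing to `1`, which defines an
algebra map from `M₂(ℂ)`. It is injective because `M₂(ℂ)` is simple, and surjective because
`e₁ = f₁₂ + f₂₁` and `e₁e₂ = -i (f₁₁ - f₂₂)` generate `Cl₂`. Finally `involute` fixes `p` and
negates `e₁`, so it multiplies `f_{ij}` by `(-1)^(i+j)`.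
-/

section SquareRootOfMinusOne

variable {A : Type*} [Ring A] [Algebra ℂ A] {u : A}

theorem isIdempotentElem_half_one_add_I_smul (hu : u * u = -1) :
    IsIdempotentElem ((2 : ℂ)⁻¹ • (1 + Complex.I • u)) := by
  have hI : Complex.I * Complex.I = -1 := Complex.I_mul_I
  simp only [IsIdempotentElem, smul_mul_smul_comm, add_mul, mul_add, one_mul, mul_one, hu, hI]
  match_scalars <;> ring

theorem half_one_sub_I_smul_eq (u : A) :
    (2 : ℂ)⁻¹ • (1 - Complex.I • u) = 1 - (2 : ℂ)⁻¹ • (1 + Complex.I • u) := by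
  match_scalars <;> ring

theorem half_one_add_I_smul_sub_half_one_sub_I_smul (u : A) :
    (2 : ℂ)⁻¹ • (1 + Complex.I • u) - (2 : ℂ)⁻¹ • (1 - Complex.I • u) = Complex.I • u := by
  match_scalars <;> ring

theorem mul_half_one_add_I_smul_of_anticomm {a : A} (h : a * u = -(u * a)) :
    a * ((2 : ℂ)⁻¹ • (1 + Complex.I • u)) = ((2 : ℂ)⁻¹ • (1 - Complex.I • u)) * a := by
  rw [mul_smul_comm, smul_mul_assoc, mul_add, sub_mul, mul_one, one_mul, mul_smul_comm,
    smul_mul_assoc, h, smul_neg, sub_eq_add_neg]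

end SquareRootOfMinusOne

namespace Matrix

variable {R : Type*} [CommSemiring R]

theorem linearMap_apply_eq_sum_single {m n M : Type*} [Fintype m] [Fintype n] [DecidableEq m]
    [DecidableEq n] [AddCommMonoid M] [Module R M] (φ : Matrix m n R →ₗ[R] M)
    (x : Matrix m n R) : φ x = ∑ i, ∑ j, x i j • φ (single i j 1) := by
  conv_lhs => rw [matrix_eq_sum_single x]
  simp only [map_sum, ← map_smul, smul_single, smul_eq_mul, mul_one]

variable {A n : Type*} [Semiring A] [Algebra R A] [Fintype n] [DecidableEq n]

def matrixUnitsAlgHom (u : n → n → A)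
    (hmul : ∀ i j k l, u i j * u k l = if j = k then u i l else 0) (hone : ∑ i, u i i = 1) :
    Matrix n n R →ₐ[R] A :=
  AlgHom.ofLinearMap (liftLinear R fun i j => LinearMap.toSpanSingleton R A (u i j))
    (by simp [liftLinear_apply, one_apply, ite_smul, hone])
    (by
      intro x y
      simp only [liftLinear_apply, LinearMap.toSpanSingleton_apply, mul_apply, Finset.sum_smul,
        Finset.sum_mul, Finset.mul_sum, smul_mul_smul_comm, hmul, smul_ite, smul_zero,
        Fintype.sum_ite_eq']
      conv_rhs => rw [Finset.sum_comm]; enter [2, l]; rw [Finset.sum_comm]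
      exact Finset.sum_comm)

theorem matrixUnitsAlgHom_single (u : n → n → A)
    (hmul : ∀ i j k l, u i j * u k l = if j = k then u i l else 0) (hone : ∑ i, u i i = 1)
    (i j : n) : matrixUnitsAlgHom (R := R) u hmul hone (single i j 1) = u i j := by
  simp [matrixUnitsAlgHom, liftLinear_apply, single_apply, ite_smul, ite_and]

end Matrix

section MatrixUnitsOfIdempotent

variable {M : Type*} [MonoidWithZero M]

def matrixUnitsOfIdempotent (p a : M) : Fin 2 → Fin 2 → M :=
  fun i j => a ^ (i : ℕ) * p * a ^ (j : ℕ)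

theorem matrixUnitsOfIdempotent_mul {p a : M} (hp : IsIdempotentElem p) (ha : a * a = 1)
    (hpap : p * a * p = 0) (i j k l : Fin 2) :
    matrixUnitsOfIdempotent p a i j * matrixUnitsOfIdempotent p a k l =
      if j = k then matrixUnitsOfIdempotent p a i l else 0 := by
  have middle : p * (a ^ (j : ℕ) * a ^ (k : ℕ)) * p = if j = k then p else 0 := by
    fin_cases j <;> fin_cases k <;> simp [ha, hp.eq, hpap]
  calc a ^ (i : ℕ) * p * a ^ (j : ℕ) * (a ^ (k : ℕ) * p * a ^ (l : ℕ))
      = a ^ (i : ℕ) * (p * (a ^ (j : ℕ) * a ^ (k : ℕ)) * p) * a ^ (l : ℕ) := by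
        simp only [mul_assoc]
    _ = _ := by
        rw [middle]
        split_ifs <;> simp [matrixUnitsOfIdempotent, mul_assoc]

end MatrixUnitsOfIdempotent

theorem Qc_apply_single (n : ℕ) (i : Fin n) : Qc n (Pi.single i 1) = 1 := by
  simp [Qc, QuadraticMap.weightedSumSquares_apply, Pi.single_apply]

theorem Qc_isOrtho_single {n : ℕ} {i j : Fin n} (h : i ≠ j) :
    (Qc n).IsOrtho (Pi.single i 1) (Pi.single j 1) := by
  simp [QuadraticMap.IsOrtho, Qc, QuadraticMap.weightedSumSquares_apply, Pi.single_apply,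
    mul_add, Finset.sum_add_distrib, h, h.symm]

theorem e_mul_self (n : ℕ) (i : Fin n) : e n i * e n i = 1 := by
  rw [e, ι_sq_scalar, Qc_apply_single, map_one]

theorem e_mul_e_of_ne {n : ℕ} {i j : Fin n} (h : i ≠ j) : e n i * e n j = -(e n j * e n i) :=
  eq_neg_of_add_eq_zero_left (ι_mul_ι_add_swap_of_isOrtho (Qc_isOrtho_single h))

theorem involute_e (n : ℕ) (i : Fin n) : involute (e n i) = -e n i :=
  involute_ι _

theorem e_mem_evenOdd_one (n : ℕ) (i : Fin n) : e n i ∈ evenOdd (Qc n) 1 :=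
  ι_mem_evenOdd_one _ _

theorem ι_eq_sum_smul_e (n : ℕ) (v : Fin n → ℂ) : ι (Qc n) v = ∑ i, v i • e n i := by
  simp only [e, ← map_smul, ← map_sum]
  congr 1
  ext j
  simp [Pi.single_apply]

theorem Cl.subalgebra_eq_top_of_forall_e_mem {n : ℕ} (S : Subalgebra ℂ (Cl n))
    (h : ∀ i, e n i ∈ S) : S = ⊤ := by
  rw [eq_top_iff, ← adjoin_range_ι, Algebra.adjoin_le_iff]
  rintro _ ⟨v, rfl⟩
  rw [ι_eq_sum_smul_e]
  exact Subalgebra.sum_mem _ fun i _ => Subalgebra.smul_mem _ (h i) _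

theorem e_anticomm_e_mul_e_of_ne {n : ℕ} {i j : Fin n} (h : i ≠ j) :
    e n i * (e n i * e n j) = -(e n i * e n j * e n i) := by
  rw [mul_assoc (e n i), e_mul_e_of_ne h.symm, ← mul_assoc, e_mul_self, one_mul, mul_neg,
    ← mul_assoc, e_mul_self, one_mul, neg_neg]

theorem e_mul_e_mul_self_of_ne {n : ℕ} {i j : Fin n} (h : i ≠ j) :
    e n i * e n j * (e n i * e n j) = -1 := by
  rw [mul_assoc, ← mul_assoc (e n j), e_mul_e_of_ne h.symm, neg_mul, mul_neg,
    mul_assoc (e n i) (e n j), e_mul_self, mul_one, e_mul_self]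

theorem f11_isIdempotentElem : IsIdempotentElem f11 :=
  isIdempotentElem_half_one_add_I_smul (e_mul_e_mul_self_of_ne (by decide))

theorem f22_eq_one_sub_f11 : f22 = 1 - f11 :=
  half_one_sub_I_smul_eq _

theorem f11_add_f22 : f11 + f22 = 1 := by
  rw [f22_eq_one_sub_f11, add_sub_cancel]

theorem e_zero_mul_f11 : e 2 0 * f11 = f22 * e 2 0 :=
  mul_half_one_add_I_smul_of_anticomm (e_anticomm_e_mul_e_of_ne (by decide))

theorem f11_mul_e_zero_mul_f11 : f11 * e 2 0 * f11 = 0 := by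
  rw [mul_assoc, e_zero_mul_f11, ← mul_assoc, f22_eq_one_sub_f11,
    f11_isIdempotentElem.mul_one_sub_self, zero_mul]

theorem f_eq_matrixUnitsOfIdempotent : f = matrixUnitsOfIdempotent f11 (e 2 0) := by
  have hf22 : f22 = e 2 0 * f11 * e 2 0 := by
    rw [e_zero_mul_f11, mul_assoc, e_mul_self, mul_one]
  ext i j
  fin_cases i <;> fin_cases j <;> simp [f, matrixUnitsOfIdempotent, hf22]

theorem f_mul_f (i j k l : Fin 2) : f i j * f k l = if j = k then f i l else 0 := by
  rw [f_eq_matrixUnitsOfIdempotent]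
  exact matrixUnitsOfIdempotent_mul f11_isIdempotentElem (e_mul_self 2 0) f11_mul_e_zero_mul_f11
    i j k l

theorem f_zero_zero : f 0 0 = f11 := rfl

theorem f_one_one : f 1 1 = f22 := rfl

theorem f11_mem_evenOdd_zero : f11 ∈ evenOdd (Qc 2) 0 :=
  Submodule.smul_mem _ _ <| add_mem SetLike.GradedOne.one_mem <|
    Submodule.smul_mem _ _ (ι_mul_ι_mem_evenOdd_zero _ _ _)

theorem f22_mem_evenOdd_zero : f22 ∈ evenOdd (Qc 2) 0 :=
  f22_eq_one_sub_f11 ▸ sub_mem SetLike.GradedOne.one_mem f11_mem_evenOdd_zero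

theorem f11_mul_e_zero_mem_evenOdd_one : f11 * e 2 0 ∈ evenOdd (Qc 2) 1 := by
  simpa using SetLike.mul_mem_graded f11_mem_evenOdd_zero (e_mem_evenOdd_one 2 0)

theorem e_zero_mul_f11_mem_evenOdd_one : e 2 0 * f11 ∈ evenOdd (Qc 2) 1 := by
  simpa using SetLike.mul_mem_graded (e_mem_evenOdd_one 2 0) f11_mem_evenOdd_zero

theorem involute_f (i j : Fin 2) : involute (f i j) = if i = j then f i j else -f i j := by
  have hf11 : involute f11 = f11 := by simp [f11, involute_e]
  rw [f_eq_matrixUnitsOfIdempotent]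
  fin_cases i <;> fin_cases j <;> simp [matrixUnitsOfIdempotent, hf11, involute_e]

theorem e_mem_of_forall_f_mem {S : Subalgebra ℂ (Cl 2)} (hS : ∀ i j, f i j ∈ S) (i : Fin 2) :
    e 2 i ∈ S := by
  have he0 : e 2 0 ∈ S := by
    have : f 0 1 + f 1 0 = e 2 0 := by simp [f, e_zero_mul_f11, ← add_mul, f11_add_f22]
    exact this ▸ add_mem (hS 0 1) (hS 1 0)
  have he01 : e 2 0 * e 2 1 ∈ S := by
    have : -Complex.I • (f 0 0 - f 1 1) = e 2 0 * e 2 1 := by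
      rw [f_zero_zero, f_one_one, f11, f22, half_one_add_I_smul_sub_half_one_sub_I_smul, smul_smul,
        neg_mul, Complex.I_mul_I, neg_neg, one_smul]
    exact this ▸ S.smul_mem (sub_mem (hS 0 0) (hS 1 1)) _
  fin_cases i
  · exact he0
  · simpa [← mul_assoc, e_mul_self] using mul_mem he0 he01

/-- The elements `f_{ij}` of `Cl 2` are a homogeneous system of matrix units summing to `1`;
the induced algebra map `M₂(ℂ) → Cl₂`, `E_{ij} ↦ f_{ij}`, is the unique such map, it is an
isomorphism, and under it conjugation by `diag(1, −1)` (negation of the off-diagonal entries)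
corresponds to the grading automorphism `involute` of `Cl₂`. -/
theorem cl2_matrix_units :
    f 0 0 ∈ evenOdd (Qc 2) 0 ∧ f 1 1 ∈ evenOdd (Qc 2) 0 ∧
    f 0 1 ∈ evenOdd (Qc 2) 1 ∧ f 1 0 ∈ evenOdd (Qc 2) 1 ∧
    f 0 0 + f 1 1 = 1 ∧
    (∀ i j k l : Fin 2, f i j * f k l = if j = k then f i l else 0) ∧
    (∃! φ : Matrix (Fin 2) (Fin 2) ℂ →ₐ[ℂ] Cl 2,
      ∀ i j : Fin 2, φ (Matrix.single i j 1) = f i j) ∧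
    (∀ φ : Matrix (Fin 2) (Fin 2) ℂ →ₐ[ℂ] Cl 2,
      (∀ i j : Fin 2, φ (Matrix.single i j 1) = f i j) →
        Function.Bijective φ ∧
        ∀ m : Matrix (Fin 2) (Fin 2) ℂ,
          CliffordAlgebra.involute (φ m) =
            φ (Matrix.of fun i j => if i = j then m i j else -(m i j))) := by
  have sum_diag : ∑ i, f i i = 1 := by rw [Fin.sum_univ_two, f_zero_zero, f_one_one, f11_add_f22]
  have apply_eq_sum (φ : Matrix (Fin 2) (Fin 2) ℂ →ₐ[ℂ] Cl 2)
      (hφ : ∀ i j, φ (Matrix.single i j 1) = f i j) (m : Matrix (Fin 2) (Fin 2) ℂ) :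
      φ m = ∑ i, ∑ j, m i j • f i j := by
    simpa only [AlgHom.toLinearMap_apply, hφ] using
      Matrix.linearMap_apply_eq_sum_single φ.toLinearMap m
  have lift_single := Matrix.matrixUnitsAlgHom_single (R := ℂ) f f_mul_f sum_diag
  refine ⟨f11_mem_evenOdd_zero, f22_mem_evenOdd_zero, f11_mul_e_zero_mem_evenOdd_one,
    e_zero_mul_f11_mem_evenOdd_one, f11_add_f22, f_mul_f,
    ⟨_, lift_single, fun ψ hψ => AlgHom.ext fun m => by
      rw [apply_eq_sum ψ hψ, apply_eq_sum _ lift_single]⟩,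
    fun φ hφ => ⟨⟨φ.toRingHom.injective, ?_⟩, fun m => ?_⟩⟩
  · have range_eq_top := Cl.subalgebra_eq_top_of_forall_e_mem φ.range <|
      e_mem_of_forall_f_mem fun i j => ⟨_, hφ i j⟩
    exact fun x => (φ.mem_range).mp (range_eq_top ▸ Algebra.mem_top)
  · simp only [apply_eq_sum φ hφ, map_sum, map_smul, involute_f, Matrix.of_apply, smul_ite,
      smul_neg, ite_smul, neg_smul]
end
end

section
/- Let B be a unital ℤ/2-graded ℂ-algebra whose grading automorphism γ_B is inner, implemented by an even element v ∈ B with v² = 1 (i.e. γ_B(b) = v·b·v for all b ∈ B), and let C be any unital ℤ/2-graded ℂ-algebra. Then the ℂ-linear map θ from the graded tensor product C ⊗̂ B to the ordinary (ungraded) tensor product C ⊗[ℂ] B of the underlying algebras, determined on homogeneous elements x ∈ C and arbitrary b ∈ B by θ(x ⊗ b) = x ⊗ v^{deg(x)}·b, is an isomorphism of ℂ-algebras. -/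
open scoped TensorProduct

noncomputable section

section Aux

private lemma pow_mod_two_eq {T : Type*} [Monoid T] {w : T} (hw : w * w = 1) (k : ℕ) :
    w ^ (k % 2) = w ^ k := by
  conv_rhs => rw [← Nat.div_add_mod k 2, pow_add, pow_mul, pow_two, hw, one_pow, one_mul]

private lemma sign_lemma (i k : ZMod 2) :
    ((-1 : ℤˣ) ^ (k * i) : ℤˣ) = (-1 : ℤˣ) ^ (i.val * k.val) := by
  have h : ((-1 : ℤˣ) ^ (k * i) : ℤˣ) = (-1 : ℤˣ) ^ ((k * i).val) := rfl
  rw [h, ZMod.val_mul, ← Int.units_pow_eq_pow_mod_two, mul_comm]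

variable {A T : Type*} [Ring A] [Algebra ℂ A] [Ring T] [Algebra ℂ T]
variable (𝒜 : ZMod 2 → Submodule ℂ A) [GradedAlgebra 𝒜]

private lemma hcomm_pow {A T : Type*} [Ring A] [Algebra ℂ A] [Ring T] [Algebra ℂ T]
    (j : A →ₐ[ℂ] T) (w : T) (hcomm : ∀ a, j a * w = w * j a) (a : A) (n : ℕ) :
    j a * w ^ n = w ^ n * j a := by
  induction n with
  | zero => simp
  | succ n ih => rw [pow_succ, ← mul_assoc, ih, mul_assoc, hcomm, ← mul_assoc]

private def homOfInnerF (j : A →ₐ[ℂ] T) (w : T) :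
    ∀ i : ZMod 2, 𝒜 i →ₗ[ℂ] T :=
  fun i => LinearMap.mulRight ℂ (w ^ (i : ZMod 2).val) ∘ₗ j.toLinearMap ∘ₗ (𝒜 i).subtype

private lemma homOfInner_hone (j : A →ₐ[ℂ] T) (w : T) :
    homOfInnerF 𝒜 j w 0 (GradedMonoid.GOne.one (A := fun i : ZMod 2 => ↥(𝒜 i))) = 1 := by
  dsimp [homOfInnerF]
  simp

private lemma homOfInner_hmul (j : A →ₐ[ℂ] T) (w : T) (hw : w * w = 1)
    (hcomm : ∀ a, j a * w = w * j a) :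
    ∀ {i k : ZMod 2} (ai : 𝒜 i) (ak : 𝒜 k),
      homOfInnerF 𝒜 j w (i + k) (GradedMonoid.GMul.mul (A := fun i : ZMod 2 => ↥(𝒜 i)) ai ak)
        = homOfInnerF 𝒜 j w i ai * homOfInnerF 𝒜 j w k ak := by
  intro i k ai ak
  dsimp [homOfInnerF]
  rw [map_mul, ZMod.val_add, pow_mod_two_eq hw, pow_add]
  simp only [← mul_assoc]
  rw [mul_assoc (j ↑ai) (w ^ i.val) (j ↑ak), ← hcomm_pow j w hcomm, ← mul_assoc]

/-- The algebra homomorphism `A →ₐ T` sending a homogeneous `x` of degree `i`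
to `j x * w ^ i.val`, where `w` squares to one and commutes with the image of `j`. -/
private def homOfInner (j : A →ₐ[ℂ] T) (w : T) (hw : w * w = 1)
    (hcomm : ∀ a, j a * w = w * j a) : A →ₐ[ℂ] T :=
  (DirectSum.toAlgebra ℂ (fun i => 𝒜 i) (homOfInnerF 𝒜 j w)
    (homOfInner_hone 𝒜 j w) (homOfInner_hmul 𝒜 j w hw hcomm)).comp
    (DirectSum.decomposeAlgEquiv 𝒜).toAlgHom

private lemma homOfInner_apply (j : A →ₐ[ℂ] T) (w : T) (hw : w * w = 1)
    (hcomm : ∀ a, j a * w = w * j a) {i : ZMod 2} {x : A} (hx : x ∈ 𝒜 i) :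
    homOfInner 𝒜 j w hw hcomm x = j x * w ^ i.val := by
  unfold homOfInner
  rw [AlgHom.comp_apply]
  have h1 : (DirectSum.decomposeAlgEquiv 𝒜).toAlgHom x
      = DirectSum.of (fun i => ↥(𝒜 i)) i (⟨x, hx⟩ : 𝒜 i) := by
    simpa using DirectSum.decompose_of_mem 𝒜 hx
  rw [h1]
  exact DirectSum.toSemiring_of (fun i => (homOfInnerF 𝒜 j w i).toAddMonoidHom)
    (homOfInner_hone 𝒜 j w) (homOfInner_hmul 𝒜 j w hw hcomm) i (⟨x, hx⟩ : 𝒜 i)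

end Aux

set_option maxHeartbeats 1000000 in
/-- Let `B` be a unital `ℤ/2`-graded `ℂ`-algebra whose grading automorphism is inner,
implemented by an even element `v` with `v² = 1` (so `v·b·v = b` for even `b` and
`v·b·v = −b` for odd `b`), and let `C` be any unital `ℤ/2`-graded `ℂ`-algebra. Then the map
`θ : C ⊗̂ B → C ⊗ B` determined on homogeneous `x ∈ C` by `θ(x ⊗ b) = x ⊗ v^{deg x}·b` is an
isomorphism of `ℂ`-algebras from the graded tensor product to the ordinary tensor product. -/
theorem graded_tensor_iso_ungraded_of_inner_grading
    (B C : Type*) [Ring B] [Algebra ℂ B] [Ring C] [Algebra ℂ C]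
    (ℬ : ZMod 2 → Submodule ℂ B) (𝒞 : ZMod 2 → Submodule ℂ C)
    [GradedAlgebra ℬ] [GradedAlgebra 𝒞]
    (v : B) (hv_even : v ∈ ℬ 0) (hv_sq : v * v = 1)
    (hv_conj_even : ∀ b ∈ ℬ 0, v * b * v = b)
    (hv_conj_odd : ∀ b ∈ ℬ 1, v * b * v = -b) :
    ∃ θ : (𝒞 ᵍ⊗[ℂ] ℬ) ≃ₐ[ℂ] (C ⊗[ℂ] B),
      ∀ (i : ZMod 2) (x : C) (b : B), x ∈ 𝒞 i →
        θ (GradedTensorProduct.tmul ℂ x b) = x ⊗ₜ[ℂ] (v ^ i.val * b) := by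
  classical
  -- powers of `v` square to one and are even
  have hvn_sq : ∀ n : ℕ, v ^ n * v ^ n = 1 := fun n => by
    rw [← pow_add, ← two_mul, pow_mul, pow_two, hv_sq, one_pow]
  have hvn_even : ∀ n : ℕ, v ^ n ∈ ℬ 0 := fun n => by
    simpa using SetLike.pow_mem_graded n hv_even
  -- v anti/commutes with homogeneous elements
  have hvb : ∀ (k : ZMod 2) (b : B), b ∈ ℬ k → v * b = ((-1 : ℤ) ^ k.val) • (b * v) := by
    intro k b hb
    have hvmul : ∀ c : B, c * v * v = c := fun c => by rw [mul_assoc, hv_sq, mul_one]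
    fin_cases k
    · have := hv_conj_even b hb
      have h2 : v * b * v * v = b * v := by rw [this]
      rw [hvmul] at h2
      show v * b = ((-1 : ℤ) ^ (0 : ℕ)) • (b * v); simpa using h2
    · have := hv_conj_odd b hb
      have h2 : v * b * v * v = -b * v := by rw [this]
      rw [hvmul] at h2
      show v * b = ((-1 : ℤ) ^ (1 : ℕ)) • (b * v); simpa [ZMod.val_one] using h2
  have hvnb : ∀ (n : ℕ) (k : ZMod 2) (b : B), b ∈ ℬ k →
      v ^ n * b = ((-1 : ℤ) ^ (n * k.val)) • (b * v ^ n) := by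
    intro n k b hb
    induction n with
    | zero => simp
    | succ n ih =>
      calc v ^ (n+1) * b = v * (v ^ n * b) := by rw [pow_succ', mul_assoc]
        _ = (-1:ℤ) ^ (n * k.val) • (v * b * v ^ n) := by rw [ih, mul_smul_comm, mul_assoc]
        _ = (-1:ℤ) ^ (n * k.val) • (((-1:ℤ) ^ k.val • (b * v)) * v ^ n) := by
            rw [hvb k b hb]
        _ = ((-1:ℤ) ^ (n * k.val + k.val)) • (b * (v * v ^ n)) := by
            rw [smul_mul_assoc, smul_smul, ← pow_add, mul_assoc]
        _ = ((-1:ℤ) ^ ((n+1) * k.val)) • (b * v ^ (n+1)) := by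
            rw [Nat.succ_mul, ← pow_succ']
  -- the ungraded-side hom Φ : C →ₐ C ⊗ B
  have hw_un : ((1 : C) ⊗ₜ[ℂ] v) * ((1 : C) ⊗ₜ[ℂ] v) = 1 := by
    rw [Algebra.TensorProduct.tmul_mul_tmul, one_mul, hv_sq, Algebra.TensorProduct.one_def]
  set jC : C →ₐ[ℂ] C ⊗[ℂ] B := Algebra.TensorProduct.includeLeft with hjC
  have hjCx : ∀ x : C, jC x = x ⊗ₜ[ℂ] 1 := fun x => rfl
  have hcomm_un : ∀ x : C, jC x * ((1 : C) ⊗ₜ[ℂ] v) = ((1 : C) ⊗ₜ[ℂ] v) * jC x := by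
    intro x
    rw [hjCx, Algebra.TensorProduct.tmul_mul_tmul, Algebra.TensorProduct.tmul_mul_tmul,
      one_mul, mul_one, one_mul, mul_one]
  set Φ : C →ₐ[ℂ] C ⊗[ℂ] B :=
    homOfInner 𝒞 jC ((1 : C) ⊗ₜ[ℂ] v) hw_un hcomm_un with hΦdef
  have hpow_un : ∀ n : ℕ, ((1 : C) ⊗ₜ[ℂ] v) ^ n = (1 : C) ⊗ₜ[ℂ] (v ^ n) := fun n => by
    rw [← Algebra.TensorProduct.includeRight_apply (R := ℂ), ← map_pow]
    rfl
  have hΦ : ∀ (i : ZMod 2) (x : C), x ∈ 𝒞 i → Φ x = x ⊗ₜ[ℂ] (v ^ i.val) := by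
    intro i x hx
    rw [hΦdef, homOfInner_apply 𝒞 _ _ _ _ hx, hpow_un, hjCx,
      Algebra.TensorProduct.tmul_mul_tmul, mul_one, one_mul]
  -- sign bookkeeping for the graded tensor product
  have hsign_un : ∀ (i k : ZMod 2) (m : C ⊗[ℂ] B),
      ((-1 : ℤˣ) ^ (k * i) : ℤˣ) • m = ((-1 : ℤ) ^ (i.val * k.val)) • m := by
    intro i k m
    rw [sign_lemma i k, Units.smul_def]
    norm_cast
  have hsign_gr : ∀ (i k : ZMod 2) (m : 𝒞 ᵍ⊗[ℂ] ℬ),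
      ((-1 : ℤˣ) ^ (k * i) : ℤˣ) • m = ((-1 : ℤ) ^ (i.val * k.val)) • m := by
    intro i k m
    rw [sign_lemma i k, Units.smul_def]
    norm_cast
  -- tmul is ℤ-linear in the second argument
  have htmulz_un : ∀ (s : ℤ) (c : C) (b : B), c ⊗ₜ[ℂ] (s • b) = s • (c ⊗ₜ[ℂ] b) := by
    intro s c b
    exact TensorProduct.tmul_smul s c b
  have htmulz_gr : ∀ (s : ℤ) (c : C) (b : B),
      GradedTensorProduct.tmul ℂ c (s • b) = (s • GradedTensorProduct.tmul ℂ c b : 𝒞 ᵍ⊗[ℂ] ℬ) := by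
    intro s c b
    show GradedTensorProduct.of ℂ 𝒞 ℬ (c ⊗ₜ (s • b)) = s • GradedTensorProduct.of ℂ 𝒞 ℬ (c ⊗ₜ b)
    rw [TensorProduct.tmul_smul, map_zsmul]
  -- the graded-side hom Ψ : C →ₐ 𝒞 ᵍ⊗ ℬ
  have hw_gr : (GradedTensorProduct.includeRight 𝒞 ℬ v) *
      (GradedTensorProduct.includeRight 𝒞 ℬ v) = 1 := by
    rw [← map_mul, hv_sq, map_one]
  have hcomm_gr : ∀ x : C, (GradedTensorProduct.includeLeft 𝒞 ℬ x) *
      (GradedTensorProduct.includeRight 𝒞 ℬ v) = (GradedTensorProduct.includeRight 𝒞 ℬ v) *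
      (GradedTensorProduct.includeLeft 𝒞 ℬ x) := by
    intro x
    induction x using DirectSum.Decomposition.inductionOn 𝒞 with
    | zero => rw [map_zero, zero_mul, mul_zero]
    | @homogeneous i x =>
      obtain ⟨x, hx⟩ := x
      show (GradedTensorProduct.tmul ℂ (x : C) 1) * (GradedTensorProduct.tmul ℂ 1 v)
        = (GradedTensorProduct.tmul ℂ 1 v) * (GradedTensorProduct.tmul ℂ (x : C) 1)
      rw [GradedTensorProduct.tmul_one_mul_one_tmul]
      have h1 : (GradedTensorProduct.tmul ℂ (1 : C) ((⟨v, hv_even⟩ : ℬ 0) : B)) *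
          (GradedTensorProduct.tmul ℂ ((⟨x, hx⟩ : 𝒞 i) : C) (1 : B))
          = (-1 : ℤˣ) ^ ((0 : ZMod 2) * i) •
            GradedTensorProduct.tmul ℂ ((1 : C) * x) (v * 1) :=
        GradedTensorProduct.tmul_coe_mul_coe_tmul 𝒞 ℬ 1 ⟨v, hv_even⟩ ⟨x, hx⟩ 1
      rw [zero_mul, uzpow_zero, one_smul, one_mul, mul_one] at h1
      exact h1.symm
    | add x y hx hy => rw [map_add, add_mul, mul_add, hx, hy]
  set Ψ : C →ₐ[ℂ] (𝒞 ᵍ⊗[ℂ] ℬ) :=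
    homOfInner 𝒞 (GradedTensorProduct.includeLeft 𝒞 ℬ)
      (GradedTensorProduct.includeRight 𝒞 ℬ v) hw_gr hcomm_gr with hΨdef
  have hΨ : ∀ (i : ZMod 2) (x : C), x ∈ 𝒞 i →
      Ψ x = GradedTensorProduct.tmul ℂ x (v ^ i.val) := by
    intro i x hx
    rw [hΨdef, homOfInner_apply 𝒞 _ _ _ _ hx, ← map_pow]
    show (GradedTensorProduct.tmul ℂ x 1) * (GradedTensorProduct.tmul ℂ 1 (v ^ i.val)) = _
    rw [GradedTensorProduct.tmul_one_mul_one_tmul]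
  -- the forwards map F
  have hanti : ∀ ⦃i k : ZMod 2⦄ (a : 𝒞 i) (b : ℬ k),
      Φ a * (Algebra.TensorProduct.includeRight (R := ℂ) (A := C) (b : B))
        = (-1 : ℤˣ) ^ (k * i) • (Algebra.TensorProduct.includeRight (b : B) * Φ a) := by
    intro i k a b
    rw [hΦ i a a.2, Algebra.TensorProduct.includeRight_apply, hsign_un,
      Algebra.TensorProduct.tmul_mul_tmul, Algebra.TensorProduct.tmul_mul_tmul,
      hvnb i.val k b b.2, htmulz_un, mul_one, one_mul]
  set F : (𝒞 ᵍ⊗[ℂ] ℬ) →ₐ[ℂ] C ⊗[ℂ] B :=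
    GradedTensorProduct.lift 𝒞 ℬ Φ Algebra.TensorProduct.includeRight hanti with hF
  have hFtmul : ∀ (x : C) (b : B), F (GradedTensorProduct.tmul ℂ x b) = Φ x * (1 ⊗ₜ[ℂ] b) :=
    fun x b => GradedTensorProduct.lift_tmul 𝒞 ℬ Φ Algebra.TensorProduct.includeRight hanti x b
  -- the backwards map G
  have hcommute : ∀ (x : C) (b : B),
      Commute (Ψ x) (GradedTensorProduct.includeRight 𝒞 ℬ b) := by
    intro x b
    induction b using DirectSum.Decomposition.inductionOn ℬ with
    | zero =>
      rw [Commute, SemiconjBy, map_zero, zero_mul, mul_zero]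
    | @homogeneous k b =>
      obtain ⟨b, hb⟩ := b
      induction x using DirectSum.Decomposition.inductionOn 𝒞 with
      | zero =>
        rw [Commute, SemiconjBy, map_zero, zero_mul, mul_zero]
      | @homogeneous i x =>
        obtain ⟨x, hx⟩ := x
        rw [Commute, SemiconjBy, hΨ i x hx]
        show _ * (GradedTensorProduct.tmul ℂ (1 : C) b)
          = (GradedTensorProduct.tmul ℂ (1 : C) b) * _
        have h1 : (GradedTensorProduct.tmul ℂ x ((⟨v ^ i.val, hvn_even i.val⟩ : ℬ 0) : B)) *
            (GradedTensorProduct.tmul ℂ (1 : C) b)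
            = GradedTensorProduct.tmul ℂ x ((v ^ i.val) * b) :=
          GradedTensorProduct.tmul_coe_mul_one_tmul 𝒞 ℬ x ⟨v ^ i.val, hvn_even i.val⟩ b
        have h2 : (GradedTensorProduct.tmul ℂ (1 : C) ((⟨b, hb⟩ : ℬ k) : B)) *
            (GradedTensorProduct.tmul ℂ ((⟨x, hx⟩ : 𝒞 i) : C) (v ^ i.val))
            = (-1 : ℤˣ) ^ (k * i) • GradedTensorProduct.tmul ℂ ((1 : C) * x) (b * v ^ i.val) :=
          GradedTensorProduct.tmul_coe_mul_coe_tmul 𝒞 ℬ 1 ⟨b, hb⟩ ⟨x, hx⟩ (v ^ i.val)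
        rw [one_mul] at h2
        rw [h1, h2, hsign_gr, hvnb i.val k b hb, htmulz_gr]
      | add x y hx hy =>
        rw [Commute, SemiconjBy, map_add, add_mul, mul_add, hx.eq, hy.eq]
    | add b c hbc1 hbc2 =>
      rw [Commute, SemiconjBy, map_add, mul_add, add_mul, hbc1.eq, hbc2.eq]
  set G : (C ⊗[ℂ] B) →ₐ[ℂ] (𝒞 ᵍ⊗[ℂ] ℬ) :=
    Algebra.TensorProduct.lift Ψ (GradedTensorProduct.includeRight 𝒞 ℬ) hcommute with hG
  have hGtmul : ∀ (x : C) (b : B),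
      G (x ⊗ₜ[ℂ] b) = Ψ x * GradedTensorProduct.tmul ℂ 1 b := fun x b =>
    Algebra.TensorProduct.lift_tmul Ψ (GradedTensorProduct.includeRight 𝒞 ℬ) hcommute x b
  -- composite identities
  have hGΦ : ∀ x : C, G (Φ x) = GradedTensorProduct.includeLeft 𝒞 ℬ x := by
    intro x
    induction x using DirectSum.Decomposition.inductionOn 𝒞 with
    | zero => rw [map_zero, map_zero, map_zero]
    | @homogeneous i x =>
      obtain ⟨x, hx⟩ := x
      rw [hΦ i x hx, hGtmul, hΨ i x hx, GradedTensorProduct.includeLeft_apply]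
      have h1 : (GradedTensorProduct.tmul ℂ x ((⟨v ^ i.val, hvn_even i.val⟩ : ℬ 0) : B)) *
          (GradedTensorProduct.tmul ℂ (1 : C) (v ^ i.val))
          = GradedTensorProduct.tmul ℂ x ((v ^ i.val) * (v ^ i.val)) :=
        GradedTensorProduct.tmul_coe_mul_one_tmul 𝒞 ℬ x ⟨v ^ i.val, hvn_even i.val⟩ (v ^ i.val)
      rw [h1, hvn_sq i.val]
    | add x y hx hy => rw [map_add, map_add, map_add, hx, hy]
  have hGΦ' : ∀ x : C, G (Φ x) = GradedTensorProduct.tmul ℂ x 1 := fun x => hGΦ x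
  have hFΨ : ∀ x : C, F (Ψ x) = x ⊗ₜ[ℂ] 1 := by
    intro x
    induction x using DirectSum.Decomposition.inductionOn 𝒞 with
    | zero => rw [map_zero, map_zero, TensorProduct.zero_tmul]
    | @homogeneous i x =>
      obtain ⟨x, hx⟩ := x
      rw [hΨ i x hx, hFtmul, hΦ i x hx, Algebra.TensorProduct.tmul_mul_tmul, mul_one,
        hvn_sq i.val]
    | add x y hx hy =>
      rw [map_add, map_add, hx, hy, TensorProduct.add_tmul]
  have hFG : F.comp G = AlgHom.id ℂ (C ⊗[ℂ] B) := by
    apply Algebra.TensorProduct.ext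
    · apply AlgHom.ext
      intro x
      show F (G (x ⊗ₜ[ℂ] 1)) = x ⊗ₜ[ℂ] 1
      have : GradedTensorProduct.tmul ℂ (1 : C) (1 : B) = (1 : 𝒞 ᵍ⊗[ℂ] ℬ) :=
        map_one (GradedTensorProduct.includeRight 𝒞 ℬ)
      rw [hGtmul, this, mul_one, hFΨ]
    · apply AlgHom.ext
      intro b
      show F (G ((1 : C) ⊗ₜ[ℂ] b)) = (1 : C) ⊗ₜ[ℂ] b
      rw [hGtmul, map_one, one_mul, hFtmul, map_one, one_mul]
  have hGF : G.comp F = AlgHom.id ℂ (𝒞 ᵍ⊗[ℂ] ℬ) := by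
    apply GradedTensorProduct.algHom_ext
    · apply AlgHom.ext
      intro x
      simp only [AlgHom.coe_comp, Function.comp_apply, AlgHom.coe_id, id_eq,
        GradedTensorProduct.includeLeft_apply]
      rw [hFtmul]
      have h1 : ((1 : C) ⊗ₜ[ℂ] (1 : B)) = (1 : C ⊗[ℂ] B) := rfl
      rw [h1, mul_one, hGΦ', ]
    · apply AlgHom.ext
      intro b
      simp only [AlgHom.coe_comp, Function.comp_apply, AlgHom.coe_id, id_eq,
        GradedTensorProduct.includeRight_apply]
      rw [hFtmul, map_one, one_mul, hGtmul, map_one, one_mul]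
  refine ⟨AlgEquiv.ofAlgHom F G hFG hGF, ?_⟩
  intro i x b hx
  show F (GradedTensorProduct.tmul ℂ x b) = x ⊗ₜ[ℂ] (v ^ i.val * b)
  rw [hFtmul, hΦ i x hx, Algebra.TensorProduct.tmul_mul_tmul, mul_one]
end
end
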